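/- Let (X, μ) be a measure space and let {f_θ : θ ∈ Θ} be a family of measurable probability densities f_θ : X → [0,∞) (∫ f_θ dμ = 1 for all θ), each strictly positive μ-a.e. Let β > 0 and γ ∈ ℝ with A = 1 + γ(1−β) ≠ 0 and B = β − γ(1−β) ≠ 0, and suppose that for every θ, θ' ∈ Θ the integrals ∫ f_θ^{1+β} dμ and ∫ f_θ^B f_{θ'}^A dμ are finite and strictly positive. Fix θ₀ ∈ Θ. Then θ₀ minimizes the map θ ↦ LSD_{β,γ}(f_{θ₀}, f_θ) over Θ, i.e. LSD_{β,γ}(f_{θ₀}, f_θ) ≥ LSD_{β,γ}(f_{θ₀}, f_{θ₀}) = 0 for all θ ∈ Θ. -/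

import Mathlib

/-!
Clearing denominators,
`LSD_{β,γ}(g,f) = (B log ∫ f^{1+β} + A log ∫ g^{1+β} - (1+β) log ∫ f^B g^A) / (AB)`.
If `A, B > 0` its nonnegativity is Hölder's inequality with exponents `(1+β)/B` and `(1+β)/A`.
If `A < 0`, then `B > 1+β` and Hölder's inequality applies instead to the factorisation
`f^{1+β} = (f^B g^A)^{(1+β)/B} (g^{1+β})^{-A/B}`, the reversal of the inequality being absorbed by
the sign of `AB`; the case `B < 0` is the same with `f` and `g` exchanged. At `f = g` the three
integrals coincide and the coefficients `B + A - (1+β)` cancel.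
-/

open MeasureTheory
open scoped ENNReal NNReal

/-- The logarithmic S-divergence `LSD_{β,γ}(g,f)` with `A = 1 + γ(1−β)`,
`B = β − γ(1−β)`. -/
noncomputable def LSD {X : Type*} [MeasurableSpace X] (μ : Measure X) (β A B : ℝ)
    (g f : X → ℝ≥0) : ℝ :=
  (1 / A) * Real.log (∫⁻ x, (f x : ℝ≥0∞) ^ (1 + β) ∂μ).toReal -
    ((1 + β) / (A * B)) *
      Real.log (∫⁻ x, (f x : ℝ≥0∞) ^ B * (g x : ℝ≥0∞) ^ A ∂μ).toReal +
    (1 / B) * Real.log (∫⁻ x, (g x : ℝ≥0∞) ^ (1 + β) ∂μ).toReal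

open Real Set

theorem log_lintegral_le_of_ae_eq_rpow_mul_rpow {X : Type*} [MeasurableSpace X] {μ : Measure X}
    {F G H : X → ℝ≥0∞} (hF : AEMeasurable F μ) (hG : AEMeasurable G μ)
    {p q : ℝ} (hp : 0 ≤ p) (hq : 0 ≤ q) (hpq : p + q = 1)
    (hH : ∀ᵐ x ∂μ, H x = F x ^ p * G x ^ q) (hIH : ∫⁻ x, H x ∂μ ≠ 0)
    (hIF : ∫⁻ x, F x ∂μ ∈ Ioo 0 ∞) (hIG : ∫⁻ x, G x ∂μ ∈ Ioo 0 ∞) :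
    log (∫⁻ x, H x ∂μ).toReal ≤
      p * log (∫⁻ x, F x ∂μ).toReal + q * log (∫⁻ x, G x ∂μ).toReal := by
  have holder : ∫⁻ x, H x ∂μ ≤ (∫⁻ x, F x ∂μ) ^ p * (∫⁻ x, G x ∂μ) ^ q := by
    rw [lintegral_congr_ae hH]
    exact ENNReal.lintegral_mul_norm_pow_le hF hG hp hq hpq
  have hbound_ne_top : (∫⁻ x, F x ∂μ) ^ p * (∫⁻ x, G x ∂μ) ^ q ≠ ∞ :=
    ENNReal.mul_ne_top (ENNReal.rpow_ne_top_of_nonneg hp hIF.2.ne)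
      (ENNReal.rpow_ne_top_of_nonneg hq hIG.2.ne)
  have hF_pos := ENNReal.toReal_pos hIF.1.ne' hIF.2.ne
  have hG_pos := ENNReal.toReal_pos hIG.1.ne' hIG.2.ne
  have hH_pos := ENNReal.toReal_pos hIH (ne_top_of_le_ne_top hbound_ne_top holder)
  have holder_real := ENNReal.toReal_mono hbound_ne_top holder
  rw [ENNReal.toReal_mul, ← ENNReal.toReal_rpow, ← ENNReal.toReal_rpow] at holder_real
  calc log (∫⁻ x, H x ∂μ).toReal
      ≤ log ((∫⁻ x, F x ∂μ).toReal ^ p * (∫⁻ x, G x ∂μ).toReal ^ q) :=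
        log_le_log hH_pos holder_real
    _ = p * log (∫⁻ x, F x ∂μ).toReal + q * log (∫⁻ x, G x ∂μ).toReal := by
        rw [log_mul (by positivity) (by positivity), log_rpow hF_pos, log_rpow hG_pos]

section LSD

variable {X : Type*} [MeasurableSpace X] (μ : Measure X) {β A B : ℝ} {f g : X → ℝ≥0}

theorem LSD_eq_div (hA : A ≠ 0) (hB : B ≠ 0) :
    LSD μ β A B g f =
      (B * log (∫⁻ x, (f x : ℝ≥0∞) ^ (1 + β) ∂μ).toReal +
        A * log (∫⁻ x, (g x : ℝ≥0∞) ^ (1 + β) ∂μ).toReal -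
        (1 + β) * log (∫⁻ x, (f x : ℝ≥0∞) ^ B * (g x : ℝ≥0∞) ^ A ∂μ).toReal) / (A * B) := by
  unfold LSD
  field_simp
  ring

theorem LSD_symm : LSD μ β B A f g = LSD μ β A B g f := by
  simp only [LSD, mul_comm (_ ^ A), mul_comm B A]
  ring

theorem LSD_self (hβ : 0 < 1 + β) (hAB : A + B = 1 + β) (hA : A ≠ 0) (hB : B ≠ 0) :
    LSD μ β A B g g = 0 := by
  have hprod : ∀ x, (g x : ℝ≥0∞) ^ B * (g x : ℝ≥0∞) ^ A = (g x : ℝ≥0∞) ^ (1 + β) := fun x => by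
    rw [← ENNReal.rpow_add_of_add_pos ENNReal.coe_ne_top _ _ (by linarith), add_comm, hAB]
  rw [LSD_eq_div μ hA hB]
  simp only [hprod, ← hAB]
  ring

variable (hf : Measurable f) (hg : Measurable g) (hAB : A + B = 1 + β)
  (hIf : ∫⁻ x, (f x : ℝ≥0∞) ^ (1 + β) ∂μ ∈ Ioo 0 ∞)
  (hIg : ∫⁻ x, (g x : ℝ≥0∞) ^ (1 + β) ∂μ ∈ Ioo 0 ∞)
  (hIfg : ∫⁻ x, (f x : ℝ≥0∞) ^ B * (g x : ℝ≥0∞) ^ A ∂μ ∈ Ioo 0 ∞)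
include hf hg hAB hIf hIg hIfg

theorem LSD_nonneg_of_pos (hA : 0 < A) (hB : 0 < B) : 0 ≤ LSD μ β A B g f := by
  have hβ : 0 < 1 + β := hAB ▸ add_pos hA hB
  have holder := log_lintegral_le_of_ae_eq_rpow_mul_rpow
    (F := fun x => (f x : ℝ≥0∞) ^ (1 + β)) (G := fun x => (g x : ℝ≥0∞) ^ (1 + β))
    (by fun_prop) (by fun_prop) (div_nonneg hB.le hβ.le) (div_nonneg hA.le hβ.le)
    (by field_simp; linarith)
    (ae_of_all _ fun x => by
      simp only [← ENNReal.rpow_mul, mul_div_cancel₀ _ hβ.ne'])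
    hIfg.1.ne' hIf hIg
  rw [LSD_eq_div μ hA.ne' hB.ne']
  refine div_nonneg ?_ (mul_pos hA hB).le
  rw [div_mul_eq_mul_div, div_mul_eq_mul_div, ← add_div, le_div_iff₀ hβ] at holder
  linarith

theorem LSD_nonneg_of_neg (hβ : 0 < 1 + β) (hg0 : ∀ᵐ x ∂μ, 0 < g x) (hA : A < 0) :
    0 ≤ LSD μ β A B g f := by
  have hB : 0 < B := by linarith
  have hfactor : ∀ᵐ x ∂μ, (f x : ℝ≥0∞) ^ (1 + β) =
      ((f x : ℝ≥0∞) ^ B * (g x : ℝ≥0∞) ^ A) ^ ((1 + β) / B) *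
        ((g x : ℝ≥0∞) ^ (1 + β)) ^ (-A / B) := by
    filter_upwards [hg0] with x hgx_pos
    have hgx : (g x : ℝ≥0∞) ≠ 0 := by exact_mod_cast hgx_pos.ne'
    rw [ENNReal.mul_rpow_of_ne_top (ENNReal.rpow_ne_top_of_nonneg hB.le ENNReal.coe_ne_top)
        (ENNReal.rpow_ne_top_of_ne_zero hgx ENNReal.coe_ne_top), ← ENNReal.rpow_mul,
      ← ENNReal.rpow_mul, ← ENNReal.rpow_mul, mul_assoc,
      ← ENNReal.rpow_add _ _ hgx ENNReal.coe_ne_top, mul_div_cancel₀ _ hB.ne']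
    have : A * ((1 + β) / B) + (1 + β) * (-A / B) = 0 := by ring
    rw [this, ENNReal.rpow_zero, mul_one]
  have holder := log_lintegral_le_of_ae_eq_rpow_mul_rpow
    (F := fun x => (f x : ℝ≥0∞) ^ B * (g x : ℝ≥0∞) ^ A)
    (G := fun x => (g x : ℝ≥0∞) ^ (1 + β))
    (by fun_prop) (by fun_prop) (div_nonneg hβ.le hB.le) (div_nonneg (neg_nonneg.2 hA.le) hB.le)
    (by field_simp; linarith) hfactor hIf.1.ne' hIfg hIg
  rw [LSD_eq_div μ hA.ne hB.ne']
  refine div_nonneg_of_nonpos ?_ (mul_neg_of_neg_of_pos hA hB).le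
  rw [div_mul_eq_mul_div, div_mul_eq_mul_div, ← add_div, le_div_iff₀ hB] at holder
  linarith

theorem LSD_nonneg (hβ : 0 < 1 + β) (hf0 : ∀ᵐ x ∂μ, 0 < f x) (hg0 : ∀ᵐ x ∂μ, 0 < g x)
    (hA : A ≠ 0) (hB : B ≠ 0) : 0 ≤ LSD μ β A B g f := by
  rcases hA.lt_or_gt with hA | hA
  · exact LSD_nonneg_of_neg μ hf hg hAB hIf hIg hIfg hβ hg0 hA
  rcases hB.lt_or_gt with hB | hB
  · have hIgf : ∫⁻ x, (g x : ℝ≥0∞) ^ A * (f x : ℝ≥0∞) ^ B ∂μ ∈ Ioo 0 ∞ := by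
      simpa only [mul_comm] using hIfg
    rw [← LSD_symm]
    exact LSD_nonneg_of_neg μ hg hf (by linarith) hIg hIf hIgf hβ hf0 hB
  · exact LSD_nonneg_of_pos μ hf hg hAB hIf hIg hIfg hA hB

end LSD

theorem lsd_fisher_consistency_general {X : Type*} [MeasurableSpace X] (μ : Measure X)
    {Θ : Type*} (f : Θ → X → ℝ≥0)
    (hmeas : ∀ θ, Measurable (f θ))
    (hpos : ∀ θ, ∀ᵐ x ∂μ, 0 < f θ x)
    (β γ A B : ℝ) (hβ : 0 < β)
    (hA : A = 1 + γ * (1 - β)) (hB : B = β - γ * (1 - β))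
    (hA0 : A ≠ 0) (hB0 : B ≠ 0)
    (hint1 : ∀ θ, 0 < ∫⁻ x, (f θ x : ℝ≥0∞) ^ (1 + β) ∂μ ∧
      ∫⁻ x, (f θ x : ℝ≥0∞) ^ (1 + β) ∂μ < ∞)
    (hint2 : ∀ θ θ' : Θ, 0 < ∫⁻ x, (f θ x : ℝ≥0∞) ^ B * (f θ' x : ℝ≥0∞) ^ A ∂μ ∧
      ∫⁻ x, (f θ x : ℝ≥0∞) ^ B * (f θ' x : ℝ≥0∞) ^ A ∂μ < ∞)
    (θ₀ : Θ) :
    (∀ θ : Θ, LSD μ β A B (f θ₀) (f θ₀) ≤ LSD μ β A B (f θ₀) (f θ)) ∧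
      LSD μ β A B (f θ₀) (f θ₀) = 0 := by
  have hβ' : 0 < 1 + β := by linarith
  have hAB : A + B = 1 + β := by rw [hA, hB]; ring
  have hself : LSD μ β A B (f θ₀) (f θ₀) = 0 := LSD_self μ hβ' hAB hA0 hB0
  refine ⟨fun θ => ?_, hself⟩
  rw [hself]
  exact LSD_nonneg μ (hmeas θ) (hmeas θ₀) hAB (hint1 θ) (hint1 θ₀) (hint2 θ θ₀) hβ'
    (hpos θ) (hpos θ₀) hA0 hB0

/-- Fisher consistency of the minimum LSD functional: when the true density
`f θ₀` belongs to the model, `θ₀` minimizes `θ ↦ LSD_{β,γ}(f θ₀, f θ)`, and the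
minimum value is zero. -/
theorem lsd_fisher_consistency {X : Type*} [MeasurableSpace X] (μ : Measure X)
    {Θ : Type*} (f : Θ → X → ℝ≥0)
    (hmeas : ∀ θ, Measurable (f θ))
    (hprob : ∀ θ, ∫⁻ x, (f θ x : ℝ≥0∞) ∂μ = 1)
    (hpos : ∀ θ, ∀ᵐ x ∂μ, 0 < f θ x)
    (β γ A B : ℝ) (hβ : 0 < β)
    (hA : A = 1 + γ * (1 - β)) (hB : B = β - γ * (1 - β))
    (hA0 : A ≠ 0) (hB0 : B ≠ 0)
    (hint1 : ∀ θ, 0 < ∫⁻ x, (f θ x : ℝ≥0∞) ^ (1 + β) ∂μ ∧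
      ∫⁻ x, (f θ x : ℝ≥0∞) ^ (1 + β) ∂μ < ∞)
    (hint2 : ∀ θ θ' : Θ, 0 < ∫⁻ x, (f θ x : ℝ≥0∞) ^ B * (f θ' x : ℝ≥0∞) ^ A ∂μ ∧
      ∫⁻ x, (f θ x : ℝ≥0∞) ^ B * (f θ' x : ℝ≥0∞) ^ A ∂μ < ∞)
    (θ₀ : Θ) :
    (∀ θ : Θ, LSD μ β A B (f θ₀) (f θ₀) ≤ LSD μ β A B (f θ₀) (f θ)) ∧
      LSD μ β A B (f θ₀) (f θ₀) = 0 :=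
  lsd_fisher_consistency_general μ f hmeas hpos β γ A B hβ hA hB hA0 hB0 hint1 hint2 θ₀
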